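/- arXiv:1608.02016 — 2 statements merged into one kernel-verified Lean document; each statement's English description precedes it below -/
import Mathlib

section
/- Let ξ and η be invariant random measures on ℝ. Then for P-a.e. ω, for all u ∈ [0,1] and all s, t ∈ ℝ, one has τ^u(θ_tω, s − t) = τ^u(ω, s) − t (with ∞ − t := ∞). In particular each τ^u is an allocation, and K(ω,s,C) := ∫₀¹ 1{τ^u(ω,s) ∈ C} du defines an invariant transport kernel. -/
/-!
Translating both measures by `-t` translates every candidate endpoint in the infimum defining
`τ^u` by `-t`, and `x ↦ x - t` is an order automorphism of `EReal`, so it commutes with `sInf`.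
The kernel identity is the case `t = s`, read through the same automorphism.
-/

open MeasureTheory

/-- `τ^u(s) := inf{t > s : u μ{s} + μ((s,t)) ≤ ν[s,t]}`, with `inf ∅ = ∞`. -/
noncomputable def tauU (μ ν : Measure ℝ) (u s : ℝ) : EReal :=
  sInf (Real.toEReal ''
    {t : ℝ | s < t ∧ ENNReal.ofReal u * μ {s} + μ (Set.Ioo s t) ≤ ν (Set.Icc s t)})

/-- The transport kernel `K(s, C) := ∫₀¹ 1{τ^u(s) ∈ C} du`. -/
noncomputable def tauKernel (μ ν : Measure ℝ) (s : ℝ) (C : Set ℝ) : ENNReal :=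
  volume {u : ℝ | u ∈ Set.Icc (0 : ℝ) 1 ∧ tauU μ ν u s ∈ Real.toEReal '' C}

open Set

namespace EReal

noncomputable def subCoeOrderIso (t : ℝ) : EReal ≃o EReal where
  toFun x := x - t
  invFun x := x + t
  left_inv _ := EReal.sub_add_cancel
  right_inv _ := EReal.add_sub_cancel_right
  map_rel_iff' {x y} := by
    simp only [Equiv.coe_fn_mk, sub_eq_add_neg, ← EReal.coe_neg]
    exact (EReal.addLECancellable_coe (-t)).add_le_add_iff_right

lemma sInf_image_sub_coe (A : Set EReal) (t : ℝ) :
    sInf ((· - (t : EReal)) '' A) = sInf A - t := by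
  rw [sInf_image]
  exact ((subCoeOrderIso t).map_sInf A).symm

lemma image_coe_preimage_add (S : Set ℝ) (t : ℝ) :
    Real.toEReal '' ((· + t) ⁻¹' S) = (· - (t : EReal)) '' (Real.toEReal '' S) := by
  rw [← image_add_right', image_image, image_image]
  exact image_congr fun x _ => EReal.coe_sub x t

lemma sub_coe_mem_image_coe_preimage_add {x : EReal} {t : ℝ} {C : Set ℝ} :
    x - t ∈ Real.toEReal '' ((· + t) ⁻¹' C) ↔ x ∈ Real.toEReal '' C := by
  rw [image_coe_preimage_add]
  exact (subCoeOrderIso t).injective.mem_set_image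

end EReal

def tauSet (μ ν : Measure ℝ) (u s : ℝ) : Set ℝ :=
  {t : ℝ | s < t ∧ ENNReal.ofReal u * μ {s} + μ (Ioo s t) ≤ ν (Icc s t)}

lemma tauU_eq_sInf_tauSet (μ ν : Measure ℝ) (u s : ℝ) :
    tauU μ ν u s = sInf (Real.toEReal '' tauSet μ ν u s) := rfl

lemma tauSet_map_sub (μ ν : Measure ℝ) (u s t : ℝ) :
    tauSet (μ.map (· - t)) (ν.map (· - t)) u (s - t) = (· + t) ⁻¹' tauSet μ ν u s := by
  have hmeas : Measurable fun x : ℝ => x - t := measurable_sub_const t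
  have hsingleton : (fun x : ℝ => x - t) ⁻¹' {s - t} = {s} := by ext; simp
  ext r
  simp only [tauSet, mem_preimage, mem_ofPred_eq,
    Measure.map_apply hmeas (measurableSet_singleton _), Measure.map_apply hmeas measurableSet_Ioo,
    Measure.map_apply hmeas measurableSet_Icc, hsingleton, preimage_sub_const_Ioo,
    preimage_sub_const_Icc, sub_add_cancel, sub_lt_iff_lt_add]

lemma tauU_map_sub (μ ν : Measure ℝ) (u s t : ℝ) :
    tauU (μ.map (· - t)) (ν.map (· - t)) u (s - t) = tauU μ ν u s - t := by
  rw [tauU_eq_sInf_tauSet, tauU_eq_sInf_tauSet, tauSet_map_sub, EReal.image_coe_preimage_add,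
    EReal.sInf_image_sub_coe]

lemma tauKernel_map_sub (μ ν : Measure ℝ) (s : ℝ) (C : Set ℝ) :
    tauKernel (μ.map (· - s)) (ν.map (· - s)) 0 ((· + s) ⁻¹' C) = tauKernel μ ν s C := by
  unfold tauKernel
  congr 1
  ext u
  rw [mem_ofPred_eq, mem_ofPred_eq, ← sub_self s, tauU_map_sub,
    EReal.sub_coe_mem_image_coe_preimage_add]

theorem tauU_equivariant_general
    {Ω : Type*} [MeasurableSpace Ω] (P : Measure Ω)
    (θ : ℝ → Ω → Ω)
    (ξ η : Ω → Measure ℝ)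
    (hξinv : ∀ᵐ ω ∂P, ∀ t : ℝ, ξ (θ t ω) = (ξ ω).map fun x => x - t)
    (hηinv : ∀ᵐ ω ∂P, ∀ t : ℝ, η (θ t ω) = (η ω).map fun x => x - t) :
    -- equivariance of `τ^u`:
    (∀ᵐ ω ∂P, ∀ u : ℝ, u ∈ Set.Icc (0 : ℝ) 1 → ∀ s t : ℝ,
      tauU (ξ (θ t ω)) (η (θ t ω)) u (s - t) = tauU (ξ ω) (η ω) u s - (t : EReal)) ∧
    -- invariance of the transport kernel `K`:
    (∀ᵐ ω ∂P, ∀ s : ℝ, ∀ C : Set ℝ,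
      tauKernel (ξ (θ s ω)) (η (θ s ω)) 0 ((fun x => x + s) ⁻¹' C)
        = tauKernel (ξ ω) (η ω) s C) := by
  refine ⟨?_, ?_⟩
  · filter_upwards [hξinv, hηinv] with ω hξω hηω u _ s t
    rw [hξω, hηω, tauU_map_sub]
  · filter_upwards [hξinv, hηinv] with ω hξω hηω s C
    rw [hξω, hηω, tauKernel_map_sub]

/-- For invariant random measures `ξ` and `η`, a.e. `ω` satisfies
`τ^u(θ_t ω, s - t) = τ^u(ω, s) - t` for all `u ∈ [0,1]` and `s, t ∈ ℝ`; in particular each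
`τ^u` is an allocation and `K(ω, s, C) := ∫₀¹ 1{τ^u(ω,s) ∈ C} du` is an invariant
transport kernel. -/
theorem tauU_equivariant
    {Ω : Type*} [MeasurableSpace Ω] (P : Measure Ω) [SigmaFinite P]
    (θ : ℝ → Ω → Ω)
    (hθmeas : Measurable fun p : Ω × ℝ => θ p.2 p.1)
    (hθzero : ∀ ω, θ 0 ω = ω)
    (hθadd : ∀ s t : ℝ, ∀ ω, θ s (θ t ω) = θ (s + t) ω)
    (hstat : ∀ s : ℝ, P.map (θ s) = P)
    (herg : ∀ A : Set Ω, MeasurableSet A → (∀ s : ℝ, θ s '' A = A) → P A = 0 ∨ P Aᶜ = 0)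
    (ξ η : Ω → Measure ℝ) (hξmeas : Measurable ξ) (hηmeas : Measurable η)
    (hξloc : ∀ᵐ ω ∂P, ∀ C : Set ℝ, IsCompact C → ξ ω C < ⊤)
    (hηloc : ∀ᵐ ω ∂P, ∀ C : Set ℝ, IsCompact C → η ω C < ⊤)
    (hξinv : ∀ᵐ ω ∂P, ∀ t : ℝ, ξ (θ t ω) = (ξ ω).map fun x => x - t)
    (hηinv : ∀ᵐ ω ∂P, ∀ t : ℝ, η (θ t ω) = (η ω).map fun x => x - t) :
    -- equivariance of `τ^u`:
    (∀ᵐ ω ∂P, ∀ u : ℝ, u ∈ Set.Icc (0 : ℝ) 1 → ∀ s t : ℝ,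
      tauU (ξ (θ t ω)) (η (θ t ω)) u (s - t) = tauU (ξ ω) (η ω) u s - (t : EReal)) ∧
    -- invariance of the transport kernel `K`:
    (∀ᵐ ω ∂P, ∀ s : ℝ, ∀ C : Set ℝ,
      tauKernel (ξ (θ s ω)) (η (θ s ω)) 0 ((fun x => x + s) ⁻¹' C)
        = tauKernel (ξ ω) (η ω) s C) :=
  tauU_equivariant_general P θ ξ η hξinv hηinv
end

section
/- Assume ξ and η are mutually singular. Let s₁ < s₂, let v₁ ∈ [0, max(ξ{s₁}, η{s₁})] and v₂ ∈ [0, max(ξ{s₂}, η{s₂})]. Then ξ*[ζ(s₁)+v₁, ζ(s₂)+v₂] = 1{η{s₁}=0}·(ξ{s₁} − v₁) + ξ((s₁,s₂)) + 1{η{s₂}=0}·v₂. -/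
/-!
`ξ*` is the image of the diffuse part `ξ^c` under `ζ` plus a mixture, over the atoms `t` of `ξ`,
of the uniform laws on the stretched atoms `[ζ t, ζ t + ξ{t}]`. Since
`ζ a + ξ{a} + η{a} < ζ b` whenever `a < b`, with `L := ζ(s₁) + v₁` and `R := ζ(s₂) + v₂` lying in
the gaps `[ζ s, ζ s + ξ{s} + η{s}]` of `ζ` at `s₁` and `s₂`, a point `t ∉ [s₁, s₂]` is sent,
together with its stretched atom, outside `[L, R]`, and a point `t ∈ (s₁, s₂)` inside it.
So the diffuse contribution is `ξ^c(s₁, s₂)` (`ξ^c` has no atoms at the endpoints), and the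
atomic one is `ξ^d(s₁, s₂)` plus the lengths `ξ{s₁} - v₁` and `min(v₂, ξ{s₂})` of the parts of the
endpoint atoms inside `[L, R]`. Mutual singularity means that an atom of `η` carries no
`ξ`-mass, which produces the indicators `1{η{sᵢ} = 0}`.
-/

open MeasureTheory

/-- The purely atomic part `μ^d` of a measure on `ℝ`. -/
noncomputable def atomicPart (μ : Measure ℝ) : Measure ℝ :=
  μ.restrict {t : ℝ | μ {t} ≠ 0}

/-- The diffuse part `μ^c` of a measure on `ℝ`. -/
noncomputable def diffusePart (μ : Measure ℝ) : Measure ℝ :=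
  μ.restrict {t : ℝ | μ {t} = 0}

/-- The time change `ζ`, stretching the real axis at each atom of `ξ` or `η`
by the size of the atom. -/
noncomputable def zeta (ξ η : Measure ℝ) (s : ℝ) : ℝ :=
  if 0 ≤ s then
    s + (atomicPart ξ (Set.Ico 0 s)).toReal + (atomicPart η (Set.Ico 0 s)).toReal
  else
    s - (atomicPart ξ (Set.Ico s 0)).toReal - (atomicPart η (Set.Ico s 0)).toReal

/-- The stretched measure `μ*` built from `μ` using the time change `ζ` of the pair `(ξ, η)`:
`μ*(C) = ∫ 1{ζ(t) ∈ C} μ^c(dt)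
  + ∬ 1{ζ(t) ≤ v ≤ ζ(t) + μ{t}, v ∈ C} μ{t}⁻¹ dv μ^d(dt)`. -/
noncomputable def starM (ξ η μ : Measure ℝ) : Measure ℝ :=
  (diffusePart μ).map (zeta ξ η) +
    (atomicPart μ).bind fun t =>
      (μ {t})⁻¹ • volume.restrict (Set.Icc (zeta ξ η t) (zeta ξ η t + (μ {t}).toReal))

open Set
open scoped ENNReal

lemma measurable_measure_singleton {α : Type*} [MeasurableSpace α] [MeasurableEq α]
    (μ : Measure α) [SFinite μ] : Measurable fun a => μ {a} := by
  have h := measurable_measure_prodMk_left (ν := μ) (measurableSet_diagonal (α := α))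
  have hfib : ∀ a : α, Prod.mk a ⁻¹' diagonal α = {a} := fun a => by ext; simp [eq_comm]
  simpa only [hfib] using h

lemma MeasureTheory.Measure.MutuallySingular.measure_singleton_eq_zero {α : Type*}
    [MeasurableSpace α] {μ ν : Measure α} (h : μ ⟂ₘ ν) {a : α} (ha : ν {a} ≠ 0) : μ {a} = 0 := by
  obtain ⟨S, -, hμS, hνS⟩ := h
  by_cases haS : a ∈ S
  · exact measure_mono_null (singleton_subset_iff.2 haS) hμS
  · exact absurd (measure_mono_null (singleton_subset_iff.2 haS) hνS) ha

lemma lintegral_eq_of_support_subset_Icc {α : Type*} [LinearOrder α] [MeasurableSpace α]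
    [MeasurableSingletonClass α] {ν : Measure α} {f : α → ℝ≥0∞} {a b : α} (hab : a < b)
    (hf : f.support ⊆ Icc a b) :
    ∫⁻ x, f x ∂ν = f a * ν {a} + ∫⁻ x in Ioo a b, f x ∂ν + f b * ν {b} := by
  rw [← setLIntegral_eq_of_support_subset hf, ← Ico_insert_right hab.le,
    ← Ioo_insert_left hab, lintegral_insert (by simp [hab.ne']), lintegral_insert (by simp)]
  ring

lemma ENNReal.le_toReal_add_toReal_of_ofReal_le_max {v : ℝ} {a b : ℝ≥0∞} (ha : a ≠ ∞)
    (hb : b ≠ ∞) (h : ENNReal.ofReal v ≤ max a b) : v ≤ a.toReal + b.toReal := by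
  rw [← ENNReal.toReal_add ha hb]
  exact (ENNReal.ofReal_le_iff_le_toReal (ENNReal.add_ne_top.2 ⟨ha, hb⟩)).1
    (h.trans (max_le le_self_add le_add_self))

section Parts

variable (μ : Measure ℝ)

lemma measurableSet_setOf_measure_singleton_eq_zero [SFinite μ] :
    MeasurableSet {t : ℝ | μ {t} = 0} :=
  measurable_measure_singleton μ (measurableSet_singleton 0)

lemma diffusePart_add_atomicPart [SFinite μ] : diffusePart μ + atomicPart μ = μ :=
  Measure.restrict_add_restrict_compl (measurableSet_setOf_measure_singleton_eq_zero μ)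

lemma ae_atomicPart_measure_singleton_ne_zero [SFinite μ] :
    ∀ᵐ t ∂atomicPart μ, μ {t} ≠ 0 :=
  ae_restrict_mem (measurableSet_setOf_measure_singleton_eq_zero μ).compl

lemma diffusePart_singleton (s : ℝ) : diffusePart μ {s} = 0 := by
  rw [diffusePart, Measure.restrict_apply (measurableSet_singleton s)]
  by_cases hs : μ {s} = 0
  · exact measure_mono_null inter_subset_left hs
  · rw [(singleton_inter_eq_empty (s := {t : ℝ | μ {t} = 0})).2 hs, measure_empty]

lemma atomicPart_singleton (s : ℝ) : atomicPart μ {s} = μ {s} := by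
  rw [atomicPart, Measure.restrict_apply (measurableSet_singleton s)]
  by_cases hs : μ {s} = 0
  · rw [hs]
    exact measure_mono_null inter_subset_left hs
  · rw [singleton_inter_of_mem hs]

lemma atomicPart_Ico_ne_top [IsLocallyFiniteMeasure μ] (a b : ℝ) :
    atomicPart μ (Ico a b) ≠ ∞ :=
  ((Measure.restrict_le_self _).trans_lt
    ((measure_mono Ico_subset_Icc_self).trans_lt isCompact_Icc.measure_lt_top)).ne

lemma toReal_atomicPart_Ico_add [IsLocallyFiniteMeasure μ] {x y z : ℝ} (hxy : x ≤ y)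
    (hyz : y ≤ z) :
    (atomicPart μ (Ico x z)).toReal =
      (atomicPart μ (Ico x y)).toReal + (atomicPart μ (Ico y z)).toReal := by
  rw [← Ico_union_Ico_eq_Ico hxy hyz, measure_union Ico_disjoint_Ico_same measurableSet_Ico,
    ENNReal.toReal_add (atomicPart_Ico_ne_top μ x y) (atomicPart_Ico_ne_top μ y z)]

lemma toReal_measure_singleton_le_atomicPart_Ico [IsLocallyFiniteMeasure μ] {a b : ℝ}
    (hab : a < b) : (μ {a}).toReal ≤ (atomicPart μ (Ico a b)).toReal := by
  rw [← atomicPart_singleton μ a]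
  exact ENNReal.toReal_mono (atomicPart_Ico_ne_top μ a b)
    (measure_mono (singleton_subset_iff.2 ⟨le_rfl, hab⟩))

lemma diffusePart_apply_add_atomicPart_apply [SFinite μ] (s : Set ℝ) :
    diffusePart μ s + atomicPart μ s = μ s := by
  rw [← Measure.add_apply, diffusePart_add_atomicPart]

end Parts

section Zeta

variable (ξ η : Measure ℝ) [IsLocallyFiniteMeasure ξ] [IsLocallyFiniteMeasure η]

lemma zeta_eq_add {a b : ℝ} (hab : a ≤ b) :
    zeta ξ η b = zeta ξ η a + (b - a) + (atomicPart ξ (Ico a b)).toReal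
      + (atomicPart η (Ico a b)).toReal := by
  have hξ := @toReal_atomicPart_Ico_add ξ _
  have hη := @toReal_atomicPart_Ico_add η _
  rcases le_or_gt 0 a with ha | ha
  · rw [zeta, zeta, if_pos ha, if_pos (ha.trans hab), hξ ha hab, hη ha hab]
    ring
  rcases le_or_gt 0 b with hb | hb
  · rw [zeta, zeta, if_pos hb, if_neg ha.not_ge, hξ ha.le hb, hη ha.le hb]
    ring
  · rw [zeta, zeta, if_neg hb.not_ge, if_neg ha.not_ge, hξ hab hb.le, hη hab hb.le]
    ring

lemma zeta_monotone : Monotone (zeta ξ η) := by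
  intro a b hab
  rw [zeta_eq_add ξ η hab]
  linarith [ENNReal.toReal_nonneg (a := atomicPart ξ (Ico a b)),
    ENNReal.toReal_nonneg (a := atomicPart η (Ico a b))]

lemma zeta_add_lt {a b : ℝ} (hab : a < b) :
    zeta ξ η a + (ξ {a}).toReal + (η {a}).toReal < zeta ξ η b := by
  rw [zeta_eq_add ξ η hab.le]
  linarith [toReal_measure_singleton_le_atomicPart_Ico ξ hab,
    toReal_measure_singleton_le_atomicPart_Ico η hab]

end Zeta

-- The gap `[ζ s, ζ (s+)]` of `ζ` at `s`.
noncomputable def zetaJump (ξ η : Measure ℝ) (s : ℝ) : Set ℝ :=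
  Icc (zeta ξ η s) (zeta ξ η s + (ξ {s}).toReal + (η {s}).toReal)

noncomputable def stretchedAtom (ξ η μ : Measure ℝ) (t : ℝ) : Set ℝ :=
  Icc (zeta ξ η t) (zeta ξ η t + (μ {t}).toReal)

noncomputable def atomKernel (ξ η μ : Measure ℝ) (t : ℝ) : Measure ℝ :=
  (μ {t})⁻¹ • volume.restrict (stretchedAtom ξ η μ t)

lemma starM_eq_map_add_bind (ξ η μ : Measure ℝ) :
    starM ξ η μ = (diffusePart μ).map (zeta ξ η) + (atomicPart μ).bind (atomKernel ξ η μ) :=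
  rfl

lemma zeta_mem_stretchedAtom (ξ η μ : Measure ℝ) (t : ℝ) : zeta ξ η t ∈ stretchedAtom ξ η μ t :=
  left_mem_Icc.2 (le_add_of_nonneg_right ENNReal.toReal_nonneg)

lemma stretchedAtom_subset_zetaJump (ξ η : Measure ℝ) (s : ℝ) :
    stretchedAtom ξ η ξ s ⊆ zetaJump ξ η s :=
  Icc_subset_Icc le_rfl (le_add_of_nonneg_right ENNReal.toReal_nonneg)

section ZetaJump

variable {ξ η : Measure ℝ} [IsLocallyFiniteMeasure ξ] [IsLocallyFiniteMeasure η] {s t x : ℝ}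

lemma lt_zeta_of_mem_zetaJump (hst : s < t) (hx : x ∈ zetaJump ξ η s) : x < zeta ξ η t :=
  hx.2.trans_lt (zeta_add_lt ξ η hst)

lemma add_mem_zetaJump {v : ℝ} (hv0 : 0 ≤ v) (hv : ENNReal.ofReal v ≤ max (ξ {s}) (η {s})) :
    zeta ξ η s + v ∈ zetaJump ξ η s := by
  have := ENNReal.le_toReal_add_toReal_of_ofReal_le_max measure_singleton_lt_top.ne
    measure_singleton_lt_top.ne hv
  exact ⟨by linarith, by linarith⟩

end ZetaJump

section Kernel

lemma measurable_smul_volume_restrict_Icc {α : Type*} [MeasurableSpace α] {c : α → ℝ≥0∞}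
    {f g : α → ℝ} (hc : Measurable c) (hf : Measurable f) (hg : Measurable g) :
    Measurable fun a => c a • volume.restrict (Icc (f a) (g a)) := by
  refine Measure.measurable_of_measurable_coe _ fun s hs => ?_
  simp only [Measure.smul_apply, Measure.restrict_apply hs, smul_eq_mul]
  have hS : MeasurableSet {p : α × ℝ | p.2 ∈ s ∩ Icc (f p.1) (g p.1)} :=
    (measurable_snd hs).inter ((measurableSet_le (hf.comp measurable_fst) measurable_snd).inter
      (measurableSet_le measurable_snd (hg.comp measurable_fst)))
  exact hc.mul (measurable_measure_prodMk_left hS)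

lemma measurable_atomKernel (ξ η μ : Measure ℝ) [IsLocallyFiniteMeasure ξ]
    [IsLocallyFiniteMeasure η] [SFinite μ] : Measurable (atomKernel ξ η μ) :=
  measurable_smul_volume_restrict_Icc (measurable_measure_singleton μ).inv
    (zeta_monotone ξ η).measurable
    ((zeta_monotone ξ η).measurable.add (measurable_measure_singleton μ).ennreal_toReal)

variable {ξ η μ : Measure ℝ} {C : Set ℝ} {t : ℝ}

lemma atomKernel_apply_mul_measure_singleton (hC : MeasurableSet C) (ht : μ {t} ≠ ∞) :
    atomKernel ξ η μ t C * μ {t} = volume (C ∩ stretchedAtom ξ η μ t) := by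
  by_cases h0 : μ {t} = 0
  · rw [h0, mul_zero, stretchedAtom, h0, ENNReal.toReal_zero, add_zero, Icc_self]
    exact (measure_mono_null inter_subset_right Real.volume_singleton).symm
  · rw [atomKernel, Measure.smul_apply, Measure.restrict_apply hC, smul_eq_mul, mul_comm,
      ← mul_assoc, ENNReal.mul_inv_cancel h0 ht, one_mul]

lemma atomKernel_apply_of_stretchedAtom_subset (hC : MeasurableSet C) (h0 : μ {t} ≠ 0)
    (ht : μ {t} ≠ ∞) (hsub : stretchedAtom ξ η μ t ⊆ C) : atomKernel ξ η μ t C = 1 := by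
  rw [atomKernel, Measure.smul_apply, Measure.restrict_apply hC, inter_eq_right.2 hsub,
    stretchedAtom, Real.volume_Icc, add_sub_cancel_left, ENNReal.ofReal_toReal ht, smul_eq_mul,
    ENNReal.inv_mul_cancel h0 ht]

lemma atomKernel_apply_of_disjoint (hC : MeasurableSet C)
    (hdisj : Disjoint C (stretchedAtom ξ η μ t)) : atomKernel ξ η μ t C = 0 := by
  rw [atomKernel, Measure.smul_apply, Measure.restrict_apply hC, hdisj.inter_eq, measure_empty,
    smul_zero]

lemma atomKernel_Icc_mul_left [IsLocallyFiniteMeasure μ] {s v R : ℝ}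
    (hv : 0 ≤ v) (hR : zeta ξ η s + (μ {s}).toReal ≤ R) :
    atomKernel ξ η μ s (Icc (zeta ξ η s + v) R) * μ {s} = μ {s} - ENNReal.ofReal v := by
  rw [atomKernel_apply_mul_measure_singleton measurableSet_Icc measure_singleton_lt_top.ne,
    stretchedAtom, Icc_inter_Icc, max_eq_left (by linarith), min_eq_right hR, Real.volume_Icc,
    add_sub_add_left_eq_sub, ENNReal.ofReal_sub _ hv,
    ENNReal.ofReal_toReal measure_singleton_lt_top.ne]

lemma atomKernel_Icc_mul_right [IsLocallyFiniteMeasure μ] {s v L : ℝ}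
    (hL : L ≤ zeta ξ η s) :
    atomKernel ξ η μ s (Icc L (zeta ξ η s + v)) * μ {s} = min (ENNReal.ofReal v) (μ {s}) := by
  rw [atomKernel_apply_mul_measure_singleton measurableSet_Icc measure_singleton_lt_top.ne,
    stretchedAtom, Icc_inter_Icc, max_eq_right hL, Real.volume_Icc, min_add_add_left,
    add_sub_cancel_left, ENNReal.ofReal_min, ENNReal.ofReal_toReal measure_singleton_lt_top.ne]

end Kernel

section StretchedInterval

variable {ξ η : Measure ℝ} [IsLocallyFiniteMeasure ξ] [IsLocallyFiniteMeasure η] {s₁ s₂ L R t : ℝ}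

lemma disjoint_Icc_stretchedAtom (hL : L ∈ zetaJump ξ η s₁) (hR : R ∈ zetaJump ξ η s₂)
    (ht : t ∉ Icc s₁ s₂) : Disjoint (Icc L R) (stretchedAtom ξ η ξ t) := by
  rw [disjoint_left]
  rintro x ⟨hLx, hxR⟩ hx
  rcases not_and_or.1 ht with ht | ht
  · exact (lt_zeta_of_mem_zetaJump (not_le.1 ht) (stretchedAtom_subset_zetaJump ξ η t hx)).not_ge
      (hL.1.trans hLx)
  · exact (lt_zeta_of_mem_zetaJump (not_le.1 ht) hR).not_ge (hx.1.trans hxR)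

lemma stretchedAtom_subset_Icc (hL : L ∈ zetaJump ξ η s₁) (hR : R ∈ zetaJump ξ η s₂)
    (ht : t ∈ Ioo s₁ s₂) : stretchedAtom ξ η ξ t ⊆ Icc L R := fun _ hx =>
  ⟨(lt_zeta_of_mem_zetaJump ht.1 hL).le.trans hx.1,
    (lt_zeta_of_mem_zetaJump ht.2 (stretchedAtom_subset_zetaJump ξ η t hx)).le.trans hR.1⟩

lemma diffusePart_map_zeta_Icc (μ : Measure ℝ) (hL : L ∈ zetaJump ξ η s₁)
    (hR : R ∈ zetaJump ξ η s₂) :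
    (diffusePart μ).map (zeta ξ η) (Icc L R) = diffusePart μ (Ioo s₁ s₂) := by
  rw [Measure.map_apply (zeta_monotone ξ η).measurable measurableSet_Icc]
  refine le_antisymm ?_ (measure_mono fun t ht => stretchedAtom_subset_Icc hL hR ht
    (zeta_mem_stretchedAtom ξ η ξ t))
  calc diffusePart μ (zeta ξ η ⁻¹' Icc L R)
      ≤ diffusePart μ (Icc s₁ s₂) := measure_mono fun t ht => not_not.1 fun hn =>
        disjoint_left.1 (disjoint_Icc_stretchedAtom hL hR hn) ht (zeta_mem_stretchedAtom ξ η ξ t)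
    _ = diffusePart μ (Ioo s₁ s₂) := measure_congr
        (Ioo_ae_eq_Icc' (diffusePart_singleton μ s₁) (diffusePart_singleton μ s₂)).symm

lemma lintegral_atomKernel_Icc (h : s₁ < s₂) (hL : L ∈ zetaJump ξ η s₁)
    (hR : R ∈ zetaJump ξ η s₂) :
    ∫⁻ t, atomKernel ξ η ξ t (Icc L R) ∂atomicPart ξ =
      atomKernel ξ η ξ s₁ (Icc L R) * ξ {s₁} + atomicPart ξ (Ioo s₁ s₂)
        + atomKernel ξ η ξ s₂ (Icc L R) * ξ {s₂} := by
  have hsupp : (fun t => atomKernel ξ η ξ t (Icc L R)).support ⊆ Icc s₁ s₂ :=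
    Function.support_subset_iff'.2 fun t ht =>
      atomKernel_apply_of_disjoint measurableSet_Icc (disjoint_Icc_stretchedAtom hL hR ht)
  have hIoo : ∫⁻ t in Ioo s₁ s₂, atomKernel ξ η ξ t (Icc L R) ∂atomicPart ξ
      = atomicPart ξ (Ioo s₁ s₂) := by
    rw [← setLIntegral_one]
    refine setLIntegral_congr_fun_ae measurableSet_Ioo
      ((ae_atomicPart_measure_singleton_ne_zero ξ).mono fun t h0 ht => ?_)
    exact atomKernel_apply_of_stretchedAtom_subset measurableSet_Icc h0
      measure_singleton_lt_top.ne (stretchedAtom_subset_Icc hL hR ht)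
  rw [lintegral_eq_of_support_subset_Icc h hsupp, hIoo, atomicPart_singleton,
    atomicPart_singleton]

end StretchedInterval

/-- Lemma 3.2: the `ξ*`-measure of the stretched closed interval
`[ζ(s₁) + v₁, ζ(s₂) + v₂]`. -/
theorem starM_Icc (ξ η : Measure ℝ)
    [IsLocallyFiniteMeasure ξ] [IsLocallyFiniteMeasure η]
    (hsing : ξ ⟂ₘ η) (s₁ s₂ : ℝ) (h : s₁ < s₂) (v₁ v₂ : ℝ)
    (hv₁0 : 0 ≤ v₁) (hv₁ : ENNReal.ofReal v₁ ≤ max (ξ {s₁}) (η {s₁}))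
    (hv₂0 : 0 ≤ v₂) (hv₂ : ENNReal.ofReal v₂ ≤ max (ξ {s₂}) (η {s₂})) :
    starM ξ η ξ (Set.Icc (zeta ξ η s₁ + v₁) (zeta ξ η s₂ + v₂))
      = (if η {s₁} = 0 then ξ {s₁} - ENNReal.ofReal v₁ else 0)
        + ξ (Set.Ioo s₁ s₂)
        + (if η {s₂} = 0 then ENNReal.ofReal v₂ else 0) := by
  have hL := add_mem_zetaJump hv₁0 hv₁
  have hR := add_mem_zetaJump hv₂0 hv₂
  have hleft : zeta ξ η s₁ + (ξ {s₁}).toReal ≤ zeta ξ η s₂ + v₂ :=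
    (lt_zeta_of_mem_zetaJump h (stretchedAtom_subset_zetaJump ξ η s₁
      (right_mem_Icc.2 (le_add_of_nonneg_right ENNReal.toReal_nonneg)))).le.trans hR.1
  have hend₁ : (if η {s₁} = 0 then ξ {s₁} - ENNReal.ofReal v₁ else 0)
      = ξ {s₁} - ENNReal.ofReal v₁ := by
    split_ifs with hη
    · rfl
    · rw [hsing.measure_singleton_eq_zero hη, zero_tsub]
  have hend₂ : (if η {s₂} = 0 then ENNReal.ofReal v₂ else 0)
      = min (ENNReal.ofReal v₂) (ξ {s₂}) := by
    split_ifs with hη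
    · exact (min_eq_left (by simpa [hη] using hv₂)).symm
    · rw [hsing.measure_singleton_eq_zero hη, min_eq_right zero_le]
  rw [starM_eq_map_add_bind, Measure.add_apply, diffusePart_map_zeta_Icc ξ hL hR,
    Measure.bind_apply measurableSet_Icc (measurable_atomKernel ξ η ξ).aemeasurable,
    lintegral_atomKernel_Icc h hL hR, atomKernel_Icc_mul_left hv₁0 hleft,
    atomKernel_Icc_mul_right (lt_zeta_of_mem_zetaJump h hL).le, hend₁, hend₂, ← diffusePart_apply_add_atomicPart_apply ξ (Ioo s₁ s₂)]
  ring
end
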